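/- Let A be an n×n real antisymmetric matrix with n odd, and suppose adj(A) ≠ 0. Then there exists a unique (up to sign) vector β ∈ ℝⁿ with adj(A) = β·βᵀ, and β spans the kernel of A. -/

import Mathlib

/-!
Skew-symmetry and odd `n` give `det A = 0` and `adj A` symmetric, so `A * adj A = 0` puts the
columns of `adj A` in `ker A`. A nonzero adjugate forces `ker A` to be a line `span {v}`: two
independent kernel vectors combine to a nonzero one vanishing at any coordinate `i`, which kills
row `i` of the adjugate. Hence `adj A = v cᵀ`, and symmetry makes it `r • v vᵀ`. The diagonal
entries of `adj A` are determinants of skew-symmetric principal submatrices, which are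
nonnegative because `det (t • 1 + A) > 0` for `t > 0`; so `r ≥ 0` and `β = √r • v`.
-/

open Matrix

namespace Matrix

variable {ι : Type*}

section SkewSymmetric

variable [Fintype ι] {R : Type*} [CommRing R] {A : Matrix ι ι R}

theorem det_eq_zero_of_transpose_eq_neg [DecidableEq ι] [IsAddTorsionFree R] (hA : Aᵀ = -A)
    (hι : Odd (Fintype.card ι)) : A.det = 0 :=
  self_eq_neg.mp <| by
    rw [← neg_one_mul, ← hι.neg_one_pow, ← det_neg, ← hA, det_transpose]

theorem adjugate_transpose_eq_self_of_transpose_eq_neg [DecidableEq ι] (hA : Aᵀ = -A)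
    (hι : Odd (Fintype.card ι)) : A.adjugateᵀ = A.adjugate := by
  rw [adjugate_transpose, hA, ← neg_one_smul R A, adjugate_smul,
    (Nat.Odd.sub_odd hι odd_one).neg_one_pow, one_smul]

theorem dotProduct_mulVec_self_eq_zero_of_transpose_eq_neg [IsAddTorsionFree R]
    (hA : Aᵀ = -A) (x : ι → R) : x ⬝ᵥ A *ᵥ x = 0 :=
  self_eq_neg.mp <| by
    rw [← dotProduct_neg, ← neg_mulVec, ← hA, mulVec_transpose, dotProduct_mulVec,
      dotProduct_comm]

end SkewSymmetric

section Ordered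

variable [Fintype ι] [DecidableEq ι]

theorem det_one_add_ne_zero_of_transpose_eq_neg {R : Type*} [Field R] [LinearOrder R]
    [IsStrictOrderedRing R] {A : Matrix ι ι R} (hA : Aᵀ = -A) : (1 + A).det ≠ 0 := by
  intro hdet
  obtain ⟨x, hx0, hx⟩ := exists_mulVec_eq_zero_iff.mpr hdet
  have hxx : x ⬝ᵥ x = 0 := by
    simpa [add_mulVec, dotProduct_mulVec_self_eq_zero_of_transpose_eq_neg hA] using
      congrArg (x ⬝ᵥ ·) hx
  exact hx0 (dotProduct_self_eq_zero.mp hxx)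

variable {A : Matrix ι ι ℝ}

theorem det_one_add_pos_of_transpose_eq_neg (hA : Aᵀ = -A) : 0 < (1 + A).det := by
  set f : ℝ → ℝ := fun s => (1 + s • A).det
  have hf : Continuous f := (continuous_const.add (continuous_id.smul continuous_const)).matrix_det
  have hf0 : ∀ s, f s ≠ 0 := fun s =>
    det_one_add_ne_zero_of_transpose_eq_neg (by rw [transpose_smul, hA, smul_neg])
  by_contra! hle
  obtain ⟨s, -, hs⟩ := isPreconnected_univ.intermediate_value (Set.mem_univ 1)
    (Set.mem_univ 0) hf.continuousOn ⟨by simpa [f] using hle, by simp [f]⟩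
  exact hf0 s hs

theorem det_nonneg_of_transpose_eq_neg (hA : Aᵀ = -A) : 0 ≤ A.det := by
  set g : ℝ → ℝ := fun t => (t • 1 + A).det
  have hg : Continuous g := ((continuous_id.smul continuous_const).add continuous_const).matrix_det
  have hpos : ∀ t ∈ Set.Ioi (0 : ℝ), 0 ≤ g t := fun t (ht : 0 < t) => by
    have hscale : t • 1 + A = t • (1 + t⁻¹ • A) := by
      rw [smul_add, smul_smul, mul_inv_cancel₀ ht.ne', one_smul]
    have hskew : (t⁻¹ • A)ᵀ = -(t⁻¹ • A) := by rw [transpose_smul, hA, smul_neg]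
    simp only [g, hscale, det_smul]
    exact (mul_pos (pow_pos ht _) (det_one_add_pos_of_transpose_eq_neg hskew)).le
  have hlim := (hg.tendsto 0).mono_left (nhdsWithin_le_nhds (s := Set.Ioi 0))
  simpa [g] using ge_of_tendsto hlim (eventually_mem_nhdsWithin.mono hpos)

theorem adjugate_apply_self_nonneg_of_transpose_eq_neg {m : ℕ}
    {A : Matrix (Fin (m + 1)) (Fin (m + 1)) ℝ} (hA : Aᵀ = -A) (i : Fin (m + 1)) :
    0 ≤ A.adjugate i i := by
  rw [adjugate_fin_succ_eq_det_submatrix, Even.neg_one_pow ⟨i, rfl⟩, one_mul]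
  exact det_nonneg_of_transpose_eq_neg (by rw [transpose_submatrix, hA]; rfl)

end Ordered

section Kernel

variable [Fintype ι] [DecidableEq ι] {K : Type*} [Field K] {A : Matrix ι ι K}

theorem adjugate_apply_eq_zero_of_mulVec_eq_zero {x : ι → K} (hx : x ≠ 0) (hAx : A *ᵥ x = 0)
    {i : ι} (hi : x i = 0) (j : ι) : A.adjugate i j = 0 := by
  rw [adjugate_apply]
  refine exists_mulVec_eq_zero_iff.mp ⟨x, hx, funext fun k => ?_⟩
  rcases eq_or_ne k j with rfl | hk
  · simp [mulVec, updateRow_self, hi]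
  · simpa [mulVec, updateRow_ne hk] using congrFun hAx k

theorem mem_span_singleton_of_mem_ker (hadj : A.adjugate ≠ 0) {u w : ι → K}
    (hu : u ∈ LinearMap.ker A.mulVecLin) (hu0 : u ≠ 0) (hw : w ∈ LinearMap.ker A.mulVecLin) :
    w ∈ K ∙ u := by
  rw [LinearMap.mem_ker, mulVecLin_apply] at hu hw
  by_contra hwu
  refine hadj (ext fun i j => ?_)
  by_cases hui : u i = 0
  · exact adjugate_apply_eq_zero_of_mulVec_eq_zero hu0 hu hui j
  refine adjugate_apply_eq_zero_of_mulVec_eq_zero (x := w i • u - u i • w) (fun h => hwu ?_)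
    (by simp [mulVec_sub, mulVec_smul, hu, hw]) (by simp [mul_comm]) j
  refine Submodule.mem_span_singleton.mpr ⟨(u i)⁻¹ * w i, ?_⟩
  rw [mul_smul, sub_eq_zero.mp h, smul_smul, inv_mul_cancel₀ hui, one_smul]

theorem exists_ker_mulVecLin_eq_span_singleton (hadj : A.adjugate ≠ 0) :
    ∃ v : ι → K, LinearMap.ker A.mulVecLin = K ∙ v := by
  by_cases hker : LinearMap.ker A.mulVecLin = ⊥
  · exact ⟨0, by rw [hker, Submodule.span_zero_singleton]⟩
  obtain ⟨u, hu, hu0⟩ := (Submodule.ne_bot_iff _).mp hker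
  exact ⟨u, le_antisymm (fun w hw => mem_span_singleton_of_mem_ker hadj hu hu0 hw)
    ((Submodule.span_singleton_le_iff_mem _ _).mpr hu)⟩

theorem range_mulVecLin_adjugate_le_ker (hdet : A.det = 0) :
    LinearMap.range A.adjugate.mulVecLin ≤ LinearMap.ker A.mulVecLin := by
  rw [LinearMap.range_le_ker_iff, ← mulVecLin_mul, mul_adjugate, hdet, zero_smul,
    mulVecLin_zero]

end Kernel

section RankOne

theorem exists_eq_vecMulVec_of_range_le_span_singleton [Fintype ι] [DecidableEq ι] {R : Type*}
    [CommSemiring R] {B : Matrix ι ι R} {v : ι → R} (h : LinearMap.range B.mulVecLin ≤ R ∙ v) :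
    ∃ c : ι → R, B = vecMulVec v c := by
  have hcol (k : ι) : ∃ a : R, a • v = fun j => B j k :=
    Submodule.mem_span_singleton.mp <| h ⟨Pi.single k 1, mulVec_single_one B k⟩
  choose c hc using hcol
  exact ⟨c, ext fun j k => by rw [vecMulVec_apply, mul_comm]; exact (congrFun (hc k) j).symm⟩

theorem exists_vecMulVec_eq_vecMulVec_self {v c : ι → ℝ}
    (hsymm : (vecMulVec v c)ᵀ = vecMulVec v c) (hdiag : ∀ i, 0 ≤ vecMulVec v c i i) :
    ∃ a : ℝ, vecMulVec v c = vecMulVec (a • v) (a • v) := by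
  rcases eq_or_ne v 0 with rfl | hv
  · exact ⟨0, by simp⟩
  obtain ⟨i, hi⟩ := Function.ne_iff.mp hv
  have hc : c = (c i / v i) • v := funext fun k => by
    have hik := congrFun (congrFun hsymm i) k
    simp only [transpose_apply, vecMulVec_apply] at hik
    rw [Pi.smul_apply, smul_eq_mul, div_mul_eq_mul_div, eq_div_iff hi]
    linear_combination -hik
  have hnonneg : 0 ≤ c i / v i := by
    have hii := hdiag i
    rw [vecMulVec_apply] at hii
    rw [← mul_div_mul_left (c i) (v i) hi]
    exact div_nonneg hii (mul_self_nonneg _)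
  generalize c i / v i = r at hc hnonneg
  subst hc
  refine ⟨√r, ext fun j k => ?_⟩
  simp only [vecMulVec_apply, Pi.smul_apply, smul_eq_mul]
  linear_combination -(v j * v k) * Real.sq_sqrt hnonneg

theorem eq_or_eq_neg_of_vecMulVec_self_eq {R : Type*} [CommRing R] [NoZeroDivisors R]
    {β γ : ι → R} (h : vecMulVec γ γ = vecMulVec β β) : γ = β ∨ γ = -β := by
  have hγβ (j k : ι) : γ j * γ k = β j * β k := congrFun (congrFun h j) k
  rcases eq_or_ne β 0 with rfl | hβ
  · exact .inl (funext fun j => mul_self_eq_zero.mp (by simpa using hγβ j j))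
  obtain ⟨i, hi⟩ := Function.ne_iff.mp hβ
  rcases mul_self_eq_mul_self_iff.mp (hγβ i i) with hγi | hγi
  · exact .inl (funext fun j => mul_right_cancel₀ hi (by rw [← hγβ j i, hγi]))
  · refine .inr (funext fun j => mul_right_cancel₀ hi ?_)
    rw [Pi.neg_apply]
    linear_combination (-1 : R) * hγβ j i + γ j * hγi

end RankOne

end Matrix

theorem adjugate_skew_odd_kernel {n : ℕ} (hn : Odd n)
    (A : Matrix (Fin n) (Fin n) ℝ) (hA : Aᵀ = -A) (hadj : A.adjugate ≠ 0) :
    ∃ β : Fin n → ℝ, A.adjugate = vecMulVec β β ∧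
      (∀ γ : Fin n → ℝ, A.adjugate = vecMulVec γ γ → γ = β ∨ γ = -β) ∧
      Submodule.span ℝ {β} = LinearMap.ker A.mulVecLin := by
  obtain ⟨m, rfl⟩ := hn
  have hodd : Odd (Fintype.card (Fin (2 * m + 1))) := by simp
  obtain ⟨v, hker⟩ := exists_ker_mulVecLin_eq_span_singleton hadj
  obtain ⟨c, hc⟩ := exists_eq_vecMulVec_of_range_le_span_singleton
    (hker ▸ range_mulVecLin_adjugate_le_ker (det_eq_zero_of_transpose_eq_neg hA hodd))
  have hsymm := adjugate_transpose_eq_self_of_transpose_eq_neg hA hodd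
  have hdiag := adjugate_apply_self_nonneg_of_transpose_eq_neg hA
  rw [hc] at hsymm hdiag
  obtain ⟨a, ha⟩ := exists_vecMulVec_eq_vecMulVec_self hsymm hdiag
  have ha0 : a ≠ 0 := by
    rintro rfl
    exact hadj (by simp [hc, ha])
  refine ⟨a • v, hc.trans ha,
    fun γ hγ => eq_or_eq_neg_of_vecMulVec_self_eq (hγ.symm.trans (hc.trans ha)), ?_⟩
  rw [hker, Submodule.span_singleton_smul_eq (isUnit_iff_ne_zero.mpr ha0)]
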